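/- Let f : T → T be a train track representative of φ ∈ Out(G) with primitive transition matrix and stretch factor λ. Then there exists a loxodromic element h ∈ G whose axis in T is f-legal, and for every n ∈ ℕ one has ‖φⁿ(h)‖_T = λⁿ·‖h‖_T; consequently Lip(T, T·φⁿ) = λⁿ for every n ∈ ℕ. -/

import Mathlib

/-!
Common framework: metric `ℝ`-trees with isometric `G`-action, modelling the
geometric realizations of the simplicial metric `G`-trees of the cyclic
deformation space `𝒟` of a (non-solvable) GBS group `G`, together with the
Lipschitz metric, translation lengths, axes, train track representatives, etc.
-/

namespace GBSFormal

/-- A metric `ℝ`-tree (geodesic, 0-hyperbolic metric space) equipped with an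
isometric action of `G`.  This models the geometric realization of a
simplicial metric `G`-tree. -/
structure GTree (G : Type*) [Group G] where
  X : Type
  dist : X → X → ℝ
  dist_self : ∀ x, dist x x = 0
  eq_of_dist : ∀ x y, dist x y = 0 → x = y
  dist_comm : ∀ x y, dist x y = dist y x
  dist_triangle : ∀ x y z, dist x z ≤ dist x y + dist y z
  /-- the four-point condition: `X` is `0`-hyperbolic -/
  four_point : ∀ x y z w,
    dist x y + dist z w ≤ max (dist x z + dist y w) (dist x w + dist y z)
  /-- `X` is geodesic -/
  geodesic : ∀ x y, ∃ γ : ℝ → X, γ 0 = x ∧ γ (dist x y) = y ∧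
    ∀ s t, 0 ≤ s → s ≤ dist x y → 0 ≤ t → t ≤ dist x y → dist (γ s) (γ t) = |s - t|
  smul : G → X → X
  smul_one : ∀ x, smul 1 x = x
  smul_mul : ∀ g h x, smul (g * h) x = smul g (smul h x)
  /-- `G` acts by isometries -/
  isom : ∀ g x y, dist (smul g x) (smul g y) = dist x y

variable {G : Type*} [Group G]

namespace GTree

/-- The geodesic segment `[x,y]` in the tree `T`. -/
def seg (T : GTree G) (x y : T.X) : Set T.X :=
  {z | T.dist x z + T.dist z y = T.dist x y}

/-- The translation length `‖g‖_T`. -/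
noncomputable def tl (T : GTree G) (g : G) : ℝ :=
  sInf (Set.range fun x => T.dist x (T.smul g x))

/-- `g` is loxodromic on `T`. -/
def Loxodromic (T : GTree G) (g : G) : Prop := 0 < T.tl g

/-- The axis (characteristic set) of `g` in `T`. -/
noncomputable def axis (T : GTree G) (g : G) : Set T.X :=
  {x | T.dist x (T.smul g x) = T.tl g}

/-- The (pointwise) stabilizer of a point of `T`. -/
def stab (T : GTree G) (x : T.X) : Subgroup G where
  carrier := {g | T.smul g x = x}
  one_mem' := T.smul_one x
  mul_mem' := by
    intro a b (ha : _ = _) (hb : _ = _)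
    show T.smul (a * b) x = x
    rw [T.smul_mul, hb, ha]
  inv_mem' := by
    intro a (ha : T.smul a x = x)
    show T.smul a⁻¹ x = x
    calc T.smul a⁻¹ x = T.smul a⁻¹ (T.smul a x) := by rw [ha]
      _ = T.smul (a⁻¹ * a) x := (T.smul_mul _ _ _).symm
      _ = x := by rw [inv_mul_cancel, T.smul_one]

/-- The action of `G` on `T` is minimal: no proper nonempty invariant subtree. -/
def Minimal (T : GTree G) : Prop :=
  ∀ A : Set T.X, A.Nonempty → (∀ g, ∀ x ∈ A, T.smul g x ∈ A) →
    (∀ x ∈ A, ∀ y ∈ A, T.seg x y ⊆ A) → A = Set.univ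

/-- Twisting the action by an automorphism `φ`: this is the tree `T · φ`,
i.e. `T` with marking precomposed with `φ`. -/
def twist (T : GTree G) (φ : MulAut G) : GTree G :=
  { T with
    smul := fun g x => T.smul (φ g) x
    smul_one := by intro x; simp only [map_one]; exact T.smul_one x
    smul_mul := by intro g h x; simp only [map_mul]; exact T.smul_mul _ _ x
    isom := fun g x y => T.isom (φ g) x y }

end GTree

/-- A `G`-equivariant map between `G`-trees. -/
def Equivariant (T S : GTree G) (f : T.X → S.X) : Prop :=
  ∀ g x, f (T.smul g x) = S.smul g (f x)

/-- `f : T → S` is `K`-Lipschitz. -/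
def LipWith (T S : GTree G) (K : ℝ) (f : T.X → S.X) : Prop :=
  ∀ x y, S.dist (f x) (f y) ≤ K * T.dist x y

/-- The optimal Lipschitz constant `Lip(T,S)` among `G`-equivariant maps. -/
noncomputable def lipConst (T S : GTree G) : ℝ :=
  sInf {K | 0 ≤ K ∧ ∃ f : T.X → S.X, Equivariant T S f ∧ LipWith T S K f}

/-- An optimal map: a `G`-equivariant map realizing `Lip(T,S)`. -/
def IsOptimal (T S : GTree G) (f : T.X → S.X) : Prop :=
  Equivariant T S f ∧ LipWith T S (lipConst T S) f

/-- `f : T → S` is a `(K,C)`-quasi-isometry. -/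
def QIsom (T S : GTree G) (K C : ℝ) (f : T.X → S.X) : Prop :=
  ∀ x y, K⁻¹ * T.dist x y - C ≤ S.dist (f x) (f y) ∧
    S.dist (f x) (f y) ≤ K * T.dist x y + C

/-- An infinite cyclic group. -/
def InfiniteCyclic (H : Type*) [Group H] : Prop :=
  Nonempty (H ≃* Multiplicative ℤ)

/-- The Baumslag–Solitar relator of `BS(1,n) = ⟨a, t | t a t⁻¹ = aⁿ⟩`
(with `a = of false`, `t = of true`). -/
def bsRel (n : ℕ) : Set (FreeGroup Bool) :=
  {FreeGroup.of true * FreeGroup.of false * (FreeGroup.of true)⁻¹ *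
    ((FreeGroup.of false) ^ n)⁻¹}

/-- A solvable GBS group: a group isomorphic to `ℤ` or to some `BS(1,n)`. -/
def IsSolvableGBS (G : Type*) [Group G] : Prop :=
  Nonempty (G ≃* Multiplicative ℤ) ∨ ∃ n : ℕ, Nonempty (G ≃* PresentedGroup (bsRel n))

/-- The cyclic deformation space `𝒟` of a non-solvable GBS group `G`:
a family of minimal metric `G`-trees with infinite cyclic point stabilizers
and cobounded action, any two of which admit equivariant (Lipschitz) maps in
both directions (same elliptic subgroups); together with the covolume
`vol(T/G)`, the right action of automorphisms (twisting the marking) and the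
family of cyclic factors of `G`. -/
structure DefSpace (G : Type*) [Group G] where
  D : Type
  tr : D → GTree G
  minimal : ∀ T, (tr T).Minimal
  stab_ic : ∀ (T : D) (x : (tr T).X), InfiniteCyclic ((tr T).stab x)
  cobounded : ∀ T : D, ∃ (x : (tr T).X) (r : ℝ), ∀ y, ∃ g : G,
      (tr T).dist ((tr T).smul g x) y ≤ r
  vol : D → ℝ
  vol_pos : ∀ T, 0 < vol T
  maps_exist : ∀ T S : D, ∃ (K : ℝ) (f : (tr T).X → (tr S).X),
      0 ≤ K ∧ Equivariant (tr T) (tr S) f ∧ LipWith (tr T) (tr S) K f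
  act : D → MulAut G → D
  act_tr : ∀ T φ, tr (act T φ) = (tr T).twist φ
  cyclicFactor : Subgroup G → Prop
  nonsolvable : ¬ IsSolvableGBS G

namespace DefSpace

/-- The Lipschitz metric `d_Lip` on `𝒟`. -/
noncomputable def dLip (S : DefSpace G) (T T' : S.D) : ℝ :=
  Real.log (lipConst (S.tr T) (S.tr T') * S.vol T / S.vol T')

/-- `φ` is fully irreducible: no positive power of `φ` preserves the
conjugacy class of a cyclic factor of `G`. -/
def FullyIrr (S : DefSpace G) (φ : MulAut G) : Prop :=
  ∀ n : ℕ, 1 ≤ n → ∀ H : Subgroup G, S.cyclicFactor H →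
    ¬ ∃ g : G, Subgroup.map ((φ ^ n : MulAut G) : G ≃* G).toMonoidHom H
        = Subgroup.map ((MulAut.conj g : G ≃* G)).toMonoidHom H

/-- A geodesic line for the Lipschitz metric. -/
def IsGeodesicLine (S : DefSpace G) (L : ℝ → S.D) : Prop :=
  ∀ t s : ℝ, t < s → S.dLip (L t) (L s) = s - t

end DefSpace

/-- A train track representative of (the outer class of) the automorphism `φ`:
a `φ`-equivariant map `f : T → T` with uniform stretch factor `lam > 1` on
edges, admitting a legal segment (legality of a segment being characterized
metrically by exact stretching by `lam` under all iterates of `f`), with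
bounded-backtracking constant `bbt`. -/
structure TrainTrackRep (T : GTree G) (φ : MulAut G) where
  f : T.X → T.X
  lam : ℝ
  lam_gt_one : 1 < lam
  equivariant : ∀ g x, f (T.smul g x) = T.smul (φ g) (f x)
  lip : ∀ x y, T.dist (f x) (f y) ≤ lam * T.dist x y
  exists_legal : ∃ x y, x ≠ y ∧ ∀ n : ℕ,
      T.dist (f^[n] x) (f^[n] y) = lam ^ n * T.dist x y
  bbt : ℝ
  bbt_nonneg : 0 ≤ bbt
  bbt_spec : ∀ x y z, z ∈ T.seg x y →
      ∃ w ∈ T.seg (f x) (f y), T.dist (f z) w ≤ bbt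

namespace TrainTrackRep

variable {T : GTree G} {φ : MulAut G}

/-- The segment `[x,y]` is legal: all iterates of `f` stretch it exactly
by the stretch factor. -/
def LegalSeg (tt : TrainTrackRep T φ) (x y : T.X) : Prop :=
  ∀ n : ℕ, T.dist (tt.f^[n] x) (tt.f^[n] y) = tt.lam ^ n * T.dist x y

/-- The critical constant `C_f = 2·BBT(f)/(λ-1)`. -/
noncomputable def criticalConst (tt : TrainTrackRep T φ) : ℝ :=
  2 * tt.bbt / (tt.lam - 1)

/-- A periodic Nielsen path, recorded by its (distinct) endpoints: a
non-backtracking segment `η = [x,y]` with `g·[fⁿ(η)] = η` for some `g ∈ G`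
and `n ≥ 1`. -/
def IsPerNielsen (tt : TrainTrackRep T φ) (x y : T.X) : Prop :=
  x ≠ y ∧ ∃ (g : G) (n : ℕ), 1 ≤ n ∧
    T.smul g (tt.f^[n] x) = x ∧ T.smul g (tt.f^[n] y) = y

/-- A periodic indivisible Nielsen path (pINP): a periodic Nielsen path that is
not a non-backtracking concatenation of two periodic Nielsen paths. -/
def IsPINP (tt : TrainTrackRep T φ) (x y : T.X) : Prop :=
  tt.IsPerNielsen x y ∧
    ¬ ∃ z ∈ T.seg x y, z ≠ x ∧ z ≠ y ∧ tt.IsPerNielsen x z ∧ tt.IsPerNielsen z y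

/-- Metric form of primitivity of the transition matrix `A(f)`: iterated
images of any nondegenerate segment eventually meet every `G`-orbit. -/
def Primitive (tt : TrainTrackRep T φ) : Prop :=
  ∀ x y : T.X, x ≠ y → ∃ N : ℕ, ∀ n ≥ N, ∀ z : T.X, ∃ g : G,
    T.smul g z ∈ tt.f^[n] '' T.seg x y

end TrainTrackRep

/-- A path in `T`, parametrized by arc length on the interval `[a,b]`. -/
structure PathIn (T : GTree G) where
  a : ℝ
  b : ℝ
  le : a ≤ b
  map : ℝ → T.X
  lip : ∀ s t, a ≤ s → s ≤ t → t ≤ b → T.dist (map s) (map t) ≤ t - s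
  arclength : ∀ s, a ≤ s → s < b → ∃ ε > 0, ∀ t, s ≤ t → t ≤ min (s + ε) b →
      T.dist (map s) (map t) = t - s

end GBSFormal

/-!
Primitivity turns the image of a legal segment under a large iterate of `f` into a legal
"window" that every orbit meets deep inside. A legal segment can always be extended legally by a
translate of a terminal piece of the window, because a direction cannot share a gate with both
sides of a legal segment. Among three consecutive extensions two end at the same end of the
window, which yields `h ∈ G` carrying a legal segment `[a, h a']` onto an overlapping later part
of the same legal ray; hence `h` has a legal axis through `a`, stretched by exactly `λⁿ` under
`fⁿ`, and `‖φⁿ(h)‖ = λⁿ ‖h‖`. Comparing this with the `λⁿ`-Lipschitz bound makes every segment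
`[z, hᵏ z]` of the axis legal. Finally `fⁿ` is a `λⁿ`-Lipschitz map `T → T·φⁿ`, and no map does
better since `h` must be stretched by `λⁿ`.
-/

namespace GBSFormal

variable {G : Type*} [Group G]

namespace GTree

theorem dist_nonneg (T : GTree G) (x y : T.X) : 0 ≤ T.dist x y := by
  linarith [T.dist_triangle x y x, T.dist_comm x y, T.dist_self x]

variable {T : GTree G}

theorem dist_pos_of_ne {x y : T.X} (h : x ≠ y) : 0 < T.dist x y :=
  (T.dist_nonneg x y).lt_of_ne fun h' => h (T.eq_of_dist x y h'.symm)

theorem ne_of_dist_pos {x y : T.X} (h : 0 < T.dist x y) : x ≠ y := by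
  rintro rfl
  exact h.ne' (T.dist_self x)

theorem mem_seg {x y z : T.X} : z ∈ T.seg x y ↔ T.dist x z + T.dist z y = T.dist x y := Iff.rfl

theorem left_mem_seg (x y : T.X) : x ∈ T.seg x y := by
  simp [mem_seg, T.dist_self]

theorem right_mem_seg (x y : T.X) : y ∈ T.seg x y := by
  simp [mem_seg, T.dist_self]

theorem eq_of_mem_seg_self {x z : T.X} (h : z ∈ T.seg x x) : z = x := by
  rw [mem_seg, T.dist_self, T.dist_comm z] at h
  exact (T.eq_of_dist x z (by linarith [T.dist_nonneg x z])).symm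

theorem ne_of_mem_seg_of_ne {x y z : T.X} (hz : z ∈ T.seg x y) (hne : x ≠ z) : x ≠ y := by
  rintro rfl
  exact hne (eq_of_mem_seg_self hz).symm

theorem mem_seg_comm {x y z : T.X} (h : z ∈ T.seg x y) : z ∈ T.seg y x := by
  rw [mem_seg] at *
  linarith [T.dist_comm x z, T.dist_comm z y, T.dist_comm x y]

theorem mem_seg_trans_left {w x y z : T.X} (h₁ : y ∈ T.seg w z) (h₂ : x ∈ T.seg w y) :
    x ∈ T.seg w z := by
  rw [mem_seg] at *
  linarith [T.dist_triangle x y z, T.dist_triangle w x z]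

theorem mem_seg_trans_left_right {w x y z : T.X} (h₁ : y ∈ T.seg w z) (h₂ : x ∈ T.seg w y) :
    y ∈ T.seg x z := by
  rw [mem_seg] at *
  linarith [T.dist_triangle x y z, T.dist_triangle w x z]

theorem mem_seg_trans_right {w x y z : T.X} (h₁ : x ∈ T.seg w z) (h₂ : y ∈ T.seg x z) :
    y ∈ T.seg w z :=
  mem_seg_comm (mem_seg_trans_left (mem_seg_comm h₁) (mem_seg_comm h₂))

theorem mem_seg_trans_right_left {w x y z : T.X} (h₁ : x ∈ T.seg w z) (h₂ : y ∈ T.seg x z) :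
    x ∈ T.seg w y :=
  mem_seg_comm (mem_seg_trans_left_right (mem_seg_comm h₁) (mem_seg_comm h₂))

theorem mem_seg_of_dist_le {a b u v : T.X} (hu : u ∈ T.seg a b) (hv : v ∈ T.seg a b)
    (h : T.dist a u ≤ T.dist a v) : u ∈ T.seg a v := by
  rw [mem_seg] at *
  have := T.four_point u v a b
  rcases le_max_iff.mp this with h' | h' <;>
    linarith [T.dist_comm u a, T.dist_comm v a, T.dist_comm v b, T.dist_comm u b,
      T.dist_triangle a u v, T.dist_comm u v]

theorem mem_seg_of_dist_le_le {a b p q r : T.X} (hp : p ∈ T.seg a b) (hq : q ∈ T.seg a b)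
    (hr : r ∈ T.seg a b) (hpq : T.dist a p ≤ T.dist a q) (hqr : T.dist a q ≤ T.dist a r) :
    q ∈ T.seg p r :=
  mem_seg_trans_left_right (mem_seg_of_dist_le hq hr hqr) (mem_seg_of_dist_le hp hq hpq)

theorem mem_seg_of_le {x : T.X} {e : ℕ → T.X} (he : ∀ n, e n ∈ T.seg x (e (n + 1))) {i j : ℕ}
    (hij : i ≤ j) : e i ∈ T.seg x (e j) := by
  induction j, hij using Nat.le_induction with
  | base => exact right_mem_seg x (e i)
  | succ k _ ih => exact mem_seg_trans_left (he k) ih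

theorem exists_mem_seg_dist_eq (a b : T.X) {t : ℝ} (h₀ : 0 ≤ t) (ht : t ≤ T.dist a b) :
    ∃ p ∈ T.seg a b, T.dist a p = t := by
  obtain ⟨γ, hγ0, hγ1, hγ⟩ := T.geodesic a b
  have hd := T.dist_nonneg a b
  have h1 : T.dist a (γ t) = t := by
    rw [← hγ0, hγ 0 t le_rfl hd h₀ ht, zero_sub, abs_neg, abs_of_nonneg h₀]
  refine ⟨γ t, ?_, h1⟩
  have h2 : T.dist (γ t) b = T.dist a b - t := by
    rw [← hγ1, hγ t _ h₀ ht hd le_rfl, hγ1, abs_of_nonpos (by linarith)]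
    ring
  rw [mem_seg, h1, h2]
  ring

variable (T) in
noncomputable def gromov (w x y : T.X) : ℝ := (T.dist w x + T.dist w y - T.dist x y) / 2

theorem gromov_nonneg (w x y : T.X) : 0 ≤ T.gromov w x y := by
  unfold gromov
  linarith [T.dist_triangle x w y, T.dist_comm x w]

theorem gromov_comm (w x y : T.X) : T.gromov w x y = T.gromov w y x := by
  unfold gromov
  rw [T.dist_comm x y]
  ring

theorem gromov_le_dist (w x y : T.X) : T.gromov w x y ≤ T.dist w x := by
  unfold gromov
  linarith [T.dist_triangle w x y]

theorem gromov_eq_zero_iff {w x y : T.X} : T.gromov w x y = 0 ↔ w ∈ T.seg x y := by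
  rw [gromov, mem_seg, T.dist_comm w x]
  constructor <;> intro h <;> linarith

theorem gromov_eq_dist_of_mem_seg {w x y : T.X} (h : y ∈ T.seg w x) :
    T.gromov w x y = T.dist w y := by
  rw [mem_seg] at h
  unfold gromov
  linarith [T.dist_comm x y]

theorem min_gromov_le (w x y z : T.X) :
    min (T.gromov w x y) (T.gromov w y z) ≤ T.gromov w x z := by
  unfold gromov
  rcases le_max_iff.mp (T.four_point x z w y) with h | h
  · apply min_le_of_right_le
    linarith [T.dist_comm z y, T.dist_comm x w, T.dist_comm w y, T.dist_comm w z]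
  · apply min_le_of_left_le
    linarith [T.dist_comm z w, T.dist_comm w y, T.dist_comm x y]

theorem gromov_pos_of_mem_seg_of_mem_seg {w x x' y : T.X} (hx : y ∈ T.seg w x)
    (hx' : y ∈ T.seg w x') (hne : y ≠ w) : 0 < T.gromov w x x' := by
  have h := min_gromov_le w x y x'
  rw [gromov_eq_dist_of_mem_seg hx, gromov_comm w y x', gromov_eq_dist_of_mem_seg hx',
    min_self] at h
  exact (dist_pos_of_ne hne.symm).trans_le h

theorem eq_of_mem_seg_of_dist_eq {w x x' y y' : T.X} (hy : y ∈ T.seg w x) (hy' : y' ∈ T.seg w x')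
    (hd : T.dist w y = T.dist w y') (hle : T.dist w y ≤ T.gromov w x x') : y = y' := by
  have h₁ := min_gromov_le w x x' y'
  have h₂ := min_gromov_le w y x y'
  rw [gromov_eq_dist_of_mem_seg hy', ← hd] at h₁
  rw [gromov_comm w y x, gromov_eq_dist_of_mem_seg hy] at h₂
  have h₃ : T.dist w y ≤ T.gromov w y y' := (le_min le_rfl ((le_min hle le_rfl).trans h₁)).trans h₂
  apply T.eq_of_dist
  unfold gromov at h₃
  linarith [T.dist_nonneg y y']

theorem mem_seg_of_overlap {a b c d : T.X} (hb : b ∈ T.seg a c) (hc : c ∈ T.seg b d)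
    (hne : b ≠ c) : c ∈ T.seg a d := by
  have h := min_gromov_le c b a d
  rw [gromov_eq_zero_iff.mpr hc, gromov_comm, gromov_eq_dist_of_mem_seg (mem_seg_comm hb)] at h
  have hpos := dist_pos_of_ne hne.symm
  exact gromov_eq_zero_iff.mp
    (le_antisymm ((min_le_iff.mp h).resolve_left hpos.not_ge) (gromov_nonneg c a d))

theorem mem_seg_or_mem_seg {p p' q : T.X} (h : q ∈ T.seg p p') (u : T.X) :
    q ∈ T.seg u p ∨ q ∈ T.seg u p' := by
  have h' := min_gromov_le q p u p'
  rw [gromov_eq_zero_iff.mpr h, gromov_comm q p u] at h'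
  rcases min_le_iff.mp h' with h' | h'
  · exact .inl (gromov_eq_zero_iff.mp (le_antisymm h' (gromov_nonneg _ _ _)))
  · exact .inr (gromov_eq_zero_iff.mp (le_antisymm h' (gromov_nonneg _ _ _)))

theorem mem_seg_of_near {p p' q q' y : T.X} (hy : y ∈ T.seg p' q')
    (hp : T.dist p p' < T.dist y p') (hq : T.dist q q' < T.dist y q') : y ∈ T.seg p q := by
  have gp : 0 < T.gromov y p' p := by
    unfold gromov
    linarith [T.dist_triangle y p p', T.dist_comm p' p]
  have gq : 0 < T.gromov y q q' := by
    unfold gromov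
    linarith [T.dist_triangle y q q']
  have h₁ := min_gromov_le y p' p q'
  rw [gromov_eq_zero_iff.mpr hy] at h₁
  have h₁' := le_antisymm ((min_le_iff.mp h₁).resolve_left gp.not_ge) (gromov_nonneg _ _ _)
  have h₂ := min_gromov_le y p q q'
  rw [h₁'] at h₂
  exact gromov_eq_zero_iff.mp
    (le_antisymm ((min_le_iff.mp h₂).resolve_right gq.not_ge) (gromov_nonneg _ _ _))

theorem smul_smul (g g' : G) (x : T.X) : T.smul g (T.smul g' x) = T.smul (g * g') x :=
  (T.smul_mul g g' x).symm

theorem inv_smul_smul (g : G) (x : T.X) : T.smul g⁻¹ (T.smul g x) = x := by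
  rw [smul_smul, inv_mul_cancel, T.smul_one]

theorem smul_inv_smul (g : G) (x : T.X) : T.smul g (T.smul g⁻¹ x) = x := by
  rw [smul_smul, mul_inv_cancel, T.smul_one]

theorem smul_injective (g : G) : Function.Injective (T.smul g) := fun x y h => by
  rw [← inv_smul_smul g x, h, inv_smul_smul]

theorem smul_pow_succ (g : G) (m : ℕ) (x : T.X) :
    T.smul (g ^ (m + 1)) x = T.smul (g ^ m) (T.smul g x) := by
  rw [smul_smul, pow_succ]

theorem smul_mem_seg (g : G) {x y z : T.X} (h : z ∈ T.seg x y) :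
    T.smul g z ∈ T.seg (T.smul g x) (T.smul g y) := by
  rw [mem_seg, T.isom, T.isom, T.isom]
  exact h

/-- If `g` maps `[e, e']` onto a terminal piece `[g e, E]` of `[A, E]`, the points of `[E, A]`
close to `E` pull back into `[e, e']`, hence into any `[x, e']` through `e`. -/
theorem inv_smul_mem_seg {x e e' A E P : T.X} {g : G} (he : e ∈ T.seg x e')
    (hA : T.smul g e ∈ T.seg A E) (hE : T.smul g e' = E) (hP : P ∈ T.seg E A)
    (hPd : T.dist E P ≤ T.dist E (T.smul g e)) :
    T.smul g⁻¹ P ∈ T.seg x e' ∧ T.dist x (T.smul g⁻¹ P) = T.dist x e' - T.dist E P := by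
  have h₁ := smul_mem_seg g⁻¹ (mem_seg_of_dist_le hP (mem_seg_comm hA) hPd)
  rw [← hE, inv_smul_smul, inv_smul_smul] at h₁
  have h₂ := mem_seg_trans_right he (mem_seg_comm h₁)
  have h₃ : T.dist (T.smul g⁻¹ P) e' = T.dist E P := by
    rw [← T.isom g, smul_inv_smul, hE, T.dist_comm]
  refine ⟨h₂, ?_⟩
  rw [mem_seg] at h₂
  linarith

theorem tl_le_dist (g : G) (z : T.X) : T.tl g ≤ T.dist z (T.smul g z) :=
  csInf_le ⟨0, by rintro _ ⟨w, rfl⟩; exact T.dist_nonneg _ _⟩ ⟨z, rfl⟩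

theorem dist_smul_pow_le (g : G) (z : T.X) (m : ℕ) :
    T.dist z (T.smul (g ^ m) z) ≤ m * T.dist z (T.smul g z) := by
  induction m with
  | zero => simp [T.smul_one, T.dist_self]
  | succ m ih =>
    have h := T.dist_triangle z (T.smul (g ^ m) z) (T.smul (g ^ m) (T.smul g z))
    rw [T.isom] at h
    rw [smul_pow_succ]
    push_cast
    linarith

theorem tl_eq_of_dist_smul_pow_eq {g : G} {P : T.X} {γ : ℝ}
    (hlin : ∀ m : ℕ, T.dist P (T.smul (g ^ m) P) = m * γ) : T.tl g = γ := by
  have h₁ : T.dist P (T.smul g P) = γ := by simpa using hlin 1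
  refine le_antisymm (h₁ ▸ tl_le_dist g P) (le_csInf ⟨_, P, rfl⟩ ?_)
  rintro _ ⟨z, rfl⟩
  by_contra! hlt
  obtain ⟨m, hm⟩ := exists_nat_gt (2 * T.dist P z / (γ - T.dist z (T.smul g z)))
  rw [div_lt_iff₀ (by linarith)] at hm
  -- `g ^ m` moves `P` by `m γ` but `z` by at most `m d(z, g z)`, and `z` stays near `P`
  have := T.dist_triangle P z (T.smul (g ^ m) P)
  have := T.dist_triangle z (T.smul (g ^ m) z) (T.smul (g ^ m) P)
  rw [T.isom, T.dist_comm z P, hlin m] at *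
  nlinarith [dist_smul_pow_le g z m]

/-- Culler–Morgan. -/
theorem smul_mem_seg_of_mem_axis {g : G} {z : T.X} (hpos : 0 < T.tl g) (hz : z ∈ T.axis g) :
    T.smul g z ∈ T.seg z (T.smul g (T.smul g z)) := by
  have hz : T.dist z (T.smul g z) = T.tl g := hz
  set D := T.dist z (T.smul g z)
  rw [← gromov_eq_zero_iff]
  by_contra hk
  set k := T.gromov (T.smul g z) z (T.smul g (T.smul g z))
  have hk : 0 < k := (gromov_nonneg _ _ _).lt_of_ne' hk
  -- otherwise `[g z, z]` and `[g z, g² z]` share an initial piece of length `t`, and the point `r`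
  -- at distance `t` from `z` is moved by only `D - 2t`
  set t := min k (D / 2)
  have ht : 0 < t := lt_min hk (by linarith)
  obtain ⟨r, hr, hrd⟩ := exists_mem_seg_dist_eq z (T.smul g z) ht.le
    (by linarith [min_le_right k (D / 2)])
  obtain ⟨p, hp, hpd⟩ := exists_mem_seg_dist_eq (T.smul g z) z ht.le
    (by rw [T.dist_comm]; linarith [min_le_right k (D / 2)])
  have hgr : T.smul g r = p := by
    refine (eq_of_mem_seg_of_dist_eq hp (smul_mem_seg g hr) ?_ ?_).symm
    · rw [hpd, T.isom, hrd]
    · exact hpd ▸ min_le_left k (D / 2)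
  have hpz : T.dist z p = D - t := by
    have := mem_seg_comm hp
    rw [mem_seg, T.dist_comm p, hpd] at this
    linarith
  have hrp := mem_seg_of_dist_le hr (mem_seg_comm hp)
    (by rw [hrd, hpz]; linarith [min_le_right k (D / 2)])
  rw [mem_seg, hrd, hpz] at hrp
  have := tl_le_dist g r
  rw [hgr, ← hz] at this
  linarith

theorem smul_pow_mem_seg {g : G} {z : T.X} (hal : T.smul g z ∈ T.seg z (T.smul g (T.smul g z)))
    (hne : z ≠ T.smul g z) (m : ℕ) : T.smul (g ^ m) z ∈ T.seg z (T.smul (g ^ (m + 1)) z) := by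
  induction m with
  | zero => simpa [T.smul_one] using left_mem_seg z (T.smul g z)
  | succ m ih =>
    refine mem_seg_of_overlap ih ?_ fun h => hne ?_
    · simpa only [smul_smul, ← mul_assoc, ← pow_succ] using smul_mem_seg (g ^ m) hal
    · rw [smul_pow_succ] at h
      exact smul_injective _ h

theorem smul_mem_seg_smul_smul {h : G} {a a' : T.X} (hne : a ≠ a')
    (ha' : a' ∈ T.seg a (T.smul h a)) (hha : T.smul h a ∈ T.seg a (T.smul h a')) :
    T.smul h a ∈ T.seg a (T.smul h (T.smul h a)) :=
  mem_seg_trans_left (mem_seg_of_overlap hha (smul_mem_seg h ha') ((smul_injective h).ne hne)) hha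

theorem dist_smul_pow_eq {g : G} {z : T.X} (hal : T.smul g z ∈ T.seg z (T.smul g (T.smul g z)))
    (hne : z ≠ T.smul g z) (m : ℕ) :
    T.dist z (T.smul (g ^ m) z) = m * T.dist z (T.smul g z) := by
  induction m with
  | zero => simp [T.smul_one, T.dist_self]
  | succ m ih =>
    rw [← smul_pow_mem_seg hal hne m, ih, smul_pow_succ, T.isom]
    push_cast
    ring

theorem dist_smul_pow_of_mem_axis {g : G} {z : T.X} (hpos : 0 < T.tl g) (hz : z ∈ T.axis g)
    (k : ℕ) : T.dist z (T.smul (g ^ k) z) = k * T.tl g := by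
  have hz' : T.dist z (T.smul g z) = T.tl g := hz
  rw [dist_smul_pow_eq (smul_mem_seg_of_mem_axis hpos hz) (ne_of_dist_pos (hz' ▸ hpos)), hz']

theorem inv_dist_smul_pow_of_mem_axis {g : G} {z : T.X} (hpos : 0 < T.tl g)
    (hz : z ∈ T.axis g) (k : ℕ) : T.dist (T.smul (g ^ k)⁻¹ z) z = k * T.tl g := by
  rw [← T.isom (g ^ k), smul_inv_smul, dist_smul_pow_of_mem_axis hpos hz]

theorem mem_seg_inv_smul_smul_of_mem_axis {g : G} {z : T.X} (hpos : 0 < T.tl g)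
    (hz : z ∈ T.axis g) (k : ℕ) : z ∈ T.seg (T.smul (g ^ k)⁻¹ z) (T.smul (g ^ k) z) := by
  have h : T.dist (T.smul (g ^ k)⁻¹ z) (T.smul (g ^ k) z) = T.dist z (T.smul (g ^ (k + k)) z) := by
    rw [← T.isom (g ^ k), smul_inv_smul, smul_smul, ← pow_add]
  rw [mem_seg, h, inv_dist_smul_pow_of_mem_axis hpos hz, dist_smul_pow_of_mem_axis hpos hz,
    dist_smul_pow_of_mem_axis hpos hz]
  push_cast
  ring

theorem exists_mem_seg_of_mem_axis {g : G} {x y : T.X} (hpos : 0 < T.tl g) (hx : x ∈ T.axis g)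
    (hy : y ∈ T.axis g) : ∃ k : ℕ, x ∈ T.seg (T.smul (g ^ k)⁻¹ x) (T.smul (g ^ k) x) ∧
      y ∈ T.seg (T.smul (g ^ k)⁻¹ x) (T.smul (g ^ k) x) := by
  obtain ⟨k, hk⟩ := exists_nat_gt (T.dist x y / T.tl g)
  rw [div_lt_iff₀ hpos] at hk
  refine ⟨k, mem_seg_inv_smul_smul_of_mem_axis hpos hx k,
    mem_seg_of_near (mem_seg_inv_smul_smul_of_mem_axis hpos hy k) ?_ ?_⟩
  · rw [T.isom, T.dist_comm y, inv_dist_smul_pow_of_mem_axis hpos hy]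
    exact hk
  · rw [T.isom, dist_smul_pow_of_mem_axis hpos hy]
    exact hk

end GTree

theorem tl_le_mul_dist_of_lipWith {T S : GTree G} {θ : T.X → S.X} {K : ℝ}
    (hθ : Equivariant T S θ) (hK : LipWith T S K θ) (g : G) (a : T.X) :
    S.tl g ≤ K * T.dist a (T.smul g a) :=
  (S.tl_le_dist g (θ a)).trans (hθ g a ▸ hK a (T.smul g a))

namespace TrainTrackRep

open GTree

variable {T : GTree G} {φ : MulAut G} (tt : TrainTrackRep T φ)

theorem lam_pos : 0 < tt.lam := one_pos.trans tt.lam_gt_one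

theorem iterate_smul (m : ℕ) (g : G) (x : T.X) :
    tt.f^[m] (T.smul g x) = T.smul ((φ ^ m : MulAut G) g) (tt.f^[m] x) := by
  induction m with
  | zero => rfl
  | succ m ih =>
    rw [Function.iterate_succ_apply', Function.iterate_succ_apply', ih, tt.equivariant, pow_succ']
    rfl

theorem dist_iterate_le (m : ℕ) (x y : T.X) :
    T.dist (tt.f^[m] x) (tt.f^[m] y) ≤ tt.lam ^ m * T.dist x y := by
  induction m with
  | zero => simp
  | succ m ih =>
    rw [Function.iterate_succ_apply', Function.iterate_succ_apply', pow_succ', mul_assoc]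
    exact (tt.lip _ _).trans (mul_le_mul_of_nonneg_left ih tt.lam_pos.le)

variable {tt} {A B C D u v x y z : T.X}

theorem legalSeg_refl (x : T.X) : tt.LegalSeg x x := fun m => by
  rw [T.dist_self, T.dist_self, mul_zero]

theorem LegalSeg.symm (h : tt.LegalSeg x y) : tt.LegalSeg y x := by
  intro m
  rw [T.dist_comm, T.dist_comm y]
  exact h m

theorem LegalSeg.smul (h : tt.LegalSeg x y) (g : G) : tt.LegalSeg (T.smul g x) (T.smul g y) := by
  intro m
  rw [iterate_smul, iterate_smul, T.isom, T.isom]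
  exact h m

theorem LegalSeg.iterate (h : tt.LegalSeg x y) (N : ℕ) :
    tt.LegalSeg (tt.f^[N] x) (tt.f^[N] y) := by
  intro m
  rw [← Function.iterate_add_apply, ← Function.iterate_add_apply, h, h, pow_add]
  ring

theorem LegalSeg.iterate_ne (h : tt.LegalSeg x y) (hne : x ≠ y) (m : ℕ) :
    tt.f^[m] x ≠ tt.f^[m] y :=
  ne_of_dist_pos (h m ▸ mul_pos (pow_pos tt.lam_pos m) (dist_pos_of_ne hne))

/-- As `f` is `λ`-Lipschitz, neither piece can be stretched by less than `λᵐ`. -/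
theorem LegalSeg.dist_iterate_of_mem_seg (h : tt.LegalSeg A B) (hz : z ∈ T.seg A B) (m : ℕ) :
    T.dist (tt.f^[m] A) (tt.f^[m] z) = tt.lam ^ m * T.dist A z ∧
      T.dist (tt.f^[m] z) (tt.f^[m] B) = tt.lam ^ m * T.dist z B := by
  have h₁ := tt.dist_iterate_le m A z
  have h₂ := tt.dist_iterate_le m z B
  have h₃ := T.dist_triangle (tt.f^[m] A) (tt.f^[m] z) (tt.f^[m] B)
  have h₄ : tt.lam ^ m * T.dist A z + tt.lam ^ m * T.dist z B = tt.lam ^ m * T.dist A B := by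
    rw [← mul_add, hz]
  constructor <;> linarith [h m]

theorem LegalSeg.iterate_mem_seg (h : tt.LegalSeg A B) (hz : z ∈ T.seg A B) (m : ℕ) :
    tt.f^[m] z ∈ T.seg (tt.f^[m] A) (tt.f^[m] B) := by
  obtain ⟨h₁, h₂⟩ := h.dist_iterate_of_mem_seg hz m
  rw [mem_seg, h₁, h₂, ← mul_add, hz, h m]

theorem LegalSeg.left (h : tt.LegalSeg A B) (hz : z ∈ T.seg A B) : tt.LegalSeg A z :=
  fun m => (h.dist_iterate_of_mem_seg hz m).1

theorem LegalSeg.right (h : tt.LegalSeg A B) (hz : z ∈ T.seg A B) : tt.LegalSeg z B :=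
  fun m => (h.dist_iterate_of_mem_seg hz m).2

theorem LegalSeg.mono (h : tt.LegalSeg A B) (hu : u ∈ T.seg A B) (hv : v ∈ T.seg A B) :
    tt.LegalSeg u v := by
  rcases le_total (T.dist A u) (T.dist A v) with huv | hvu
  · exact (h.left hv).right (mem_seg_of_dist_le hu hv huv)
  · exact ((h.left hu).right (mem_seg_of_dist_le hv hu hvu)).symm

theorem LegalSeg.union (hAC : tt.LegalSeg A C) (hBD : tt.LegalSeg B D) (hB : B ∈ T.seg A C)
    (hC : C ∈ T.seg B D) (hne : B ≠ C) : tt.LegalSeg A D := by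
  have hC' := mem_seg_of_overlap hB hC hne
  intro m
  have := mem_seg_of_overlap (hAC.iterate_mem_seg hB m) (hBD.iterate_mem_seg hC m)
    (hAC.right hB |>.iterate_ne hne m)
  rw [mem_seg, hAC m, hBD.right hC m] at this
  rw [← this, ← hC', mul_add]

/-- For legal `[q, u]` and `[q, v]`, the metric form of a legal turn at `q`. -/
def IsLegalTurn (tt : TrainTrackRep T φ) (u q v : T.X) : Prop :=
  ∀ m : ℕ, tt.f^[m] q ∈ T.seg (tt.f^[m] u) (tt.f^[m] v)

theorem IsLegalTurn.legalSeg {q : T.X} (h : tt.IsLegalTurn u q v) (hqu : tt.LegalSeg q u)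
    (hqv : tt.LegalSeg q v) : tt.LegalSeg u v := by
  intro m
  have hm := h m
  have h₀ : T.dist u q + T.dist q v = T.dist u v := h 0
  rw [mem_seg, T.dist_comm, hqu m, hqv m] at hm
  rw [← hm, ← h₀, T.dist_comm u q, mul_add]

theorem exists_fold {q : T.X} {m : ℕ} (hqu : tt.LegalSeg q u) (hqv : tt.LegalSeg q v)
    (h : tt.f^[m] q ∉ T.seg (tt.f^[m] u) (tt.f^[m] v)) :
    ∃ p ∈ T.seg q u, ∃ p' ∈ T.seg q v, p ≠ q ∧ tt.f^[m] p = tt.f^[m] p' := by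
  set c := T.gromov (tt.f^[m] q) (tt.f^[m] u) (tt.f^[m] v) with hc_def
  have hc : 0 < c := (gromov_nonneg _ _ _).lt_of_ne' (mt gromov_eq_zero_iff.mp h)
  have hlam := pow_pos tt.lam_pos m
  obtain ⟨p, hp, hpd⟩ := exists_mem_seg_dist_eq q u (t := c / tt.lam ^ m) (by positivity)
    (by rw [div_le_iff₀ hlam, mul_comm, ← hqu m]; exact gromov_le_dist _ _ _)
  obtain ⟨p', hp', hp'd⟩ := exists_mem_seg_dist_eq q v (t := c / tt.lam ^ m) (by positivity)
    (by rw [div_le_iff₀ hlam, mul_comm, ← hqv m, hc_def, gromov_comm]; exact gromov_le_dist _ _ _)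
  have hfp : T.dist (tt.f^[m] q) (tt.f^[m] p) = c := by
    rw [hqu.left hp m, hpd]
    field_simp
  have hfp' : T.dist (tt.f^[m] q) (tt.f^[m] p') = c := by
    rw [hqv.left hp' m, hp'd]
    field_simp
  refine ⟨p, hp, p', hp', (ne_of_dist_pos (hpd ▸ by positivity)).symm,
    eq_of_mem_seg_of_dist_eq (hqu.iterate_mem_seg hp m) (hqv.iterate_mem_seg hp' m)
      (hfp.trans hfp'.symm) hfp.le⟩

theorem iterate_not_mem_seg_of_le {q : T.X} {m k : ℕ} (hqu : tt.LegalSeg q u)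
    (hqv : tt.LegalSeg q v) (h : tt.f^[m] q ∉ T.seg (tt.f^[m] u) (tt.f^[m] v)) (hmk : m ≤ k) :
    tt.f^[k] q ∉ T.seg (tt.f^[k] u) (tt.f^[k] v) := by
  obtain ⟨p, hp, p', hp', hne, hpp'⟩ := exists_fold hqu hqv h
  have hk : tt.f^[k] p = tt.f^[k] p' := by
    obtain ⟨j, rfl⟩ := Nat.exists_eq_add_of_le hmk
    rw [add_comm, Function.iterate_add_apply, Function.iterate_add_apply, hpp']
  have := gromov_pos_of_mem_seg_of_mem_seg (hqu.iterate_mem_seg hp k)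
    (hk ▸ hqv.iterate_mem_seg hp' k) ((hqu.left hp).iterate_ne hne.symm k).symm
  exact fun hmem => this.ne' (gromov_eq_zero_iff.mpr hmem)

/-- Gates partition the directions at `q`: the direction of `u` cannot share a gate with both
sides of a legal segment through `q`. -/
theorem isLegalTurn_or {p p' q : T.X} (hqu : tt.LegalSeg q u) (hp : tt.LegalSeg p p')
    (hq : q ∈ T.seg p p') : tt.IsLegalTurn u q p ∨ tt.IsLegalTurn u q p' := by
  by_contra! h
  simp only [IsLegalTurn, not_forall] at h
  obtain ⟨⟨m₁, h₁⟩, ⟨m₂, h₂⟩⟩ := h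
  have h₁' := iterate_not_mem_seg_of_le hqu (hp.left hq).symm h₁ (le_max_left m₁ m₂)
  have h₂' := iterate_not_mem_seg_of_le hqu (hp.right hq) h₂ (le_max_right m₁ m₂)
  rcases mem_seg_or_mem_seg (hp.iterate_mem_seg hq (max m₁ m₂)) (tt.f^[max m₁ m₂] u) with h | h
  exacts [h₁' h, h₂' h]

variable (tt) in
structure Window where
  ends : Bool → T.X
  R : ℝ
  R_pos : 0 < R
  legal : tt.LegalSeg (ends false) (ends true)
  cover : ∀ z : T.X, ∃ g : G, T.smul g z ∈ T.seg (ends false) (ends true) ∧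
    ∀ b, R ≤ T.dist (T.smul g z) (ends b)

/-- The window is the image under a large iterate of the middle third of a legal segment. -/
theorem exists_window (hprim : tt.Primitive) : Nonempty (Window tt) := by
  obtain ⟨x, y, hxy, hleg⟩ := tt.exists_legal
  have hleg : tt.LegalSeg x y := hleg
  have hd := dist_pos_of_ne hxy
  obtain ⟨u₁, hu₁, hu₁d⟩ := exists_mem_seg_dist_eq x y (t := T.dist x y / 3) (by positivity)
    (by linarith)
  obtain ⟨u₂, hu₂, hu₂d⟩ := exists_mem_seg_dist_eq x y (t := 2 * T.dist x y / 3) (by positivity)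
    (by linarith)
  have hu₁₂ : u₁ ∈ T.seg x u₂ := mem_seg_of_dist_le hu₁ hu₂ (by linarith)
  obtain ⟨N, hN⟩ := hprim u₁ u₂ fun h => by rw [h] at hu₁d; linarith
  have hlam := pow_pos tt.lam_pos N
  refine ⟨⟨fun b => cond b (tt.f^[N] y) (tt.f^[N] x), tt.lam ^ N * (T.dist x y / 3),
    by positivity, hleg.iterate N, fun z => ?_⟩⟩
  obtain ⟨g, z', hz', hgz⟩ := hN N le_rfl z
  have hxz' : z' ∈ T.seg x u₂ := mem_seg_trans_right hu₁₂ hz'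
  have hz'y : z' ∈ T.seg x y := mem_seg_trans_left hu₂ hxz'
  have h₁ : T.dist x y / 3 ≤ T.dist x z' := by
    have := mem_seg_trans_right_left hu₁₂ hz'
    rw [mem_seg] at this
    linarith [T.dist_nonneg u₁ z']
  have h₂ : T.dist x y / 3 ≤ T.dist z' y := by
    rw [mem_seg] at hxz' hz'y
    linarith [T.dist_nonneg z' u₂]
  obtain ⟨hx, hy⟩ := hleg.dist_iterate_of_mem_seg hz'y N
  refine ⟨g, hgz ▸ hleg.iterate_mem_seg hz'y N, fun b => ?_⟩
  cases b
  · show _ ≤ T.dist _ (tt.f^[N] x)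
    rw [← hgz, T.dist_comm (tt.f^[N] z'), hx]
    exact mul_le_mul_of_nonneg_left h₁ hlam.le
  · show _ ≤ T.dist _ (tt.f^[N] y)
    rw [← hgz, hy]
    exact mul_le_mul_of_nonneg_left h₂ hlam.le

namespace Window

theorem exists_extension (W : Window tt) {e : T.X} (he : tt.LegalSeg x e) : ∃ (g : G) (b : Bool),
    T.smul g e ∈ T.seg (W.ends !b) (W.ends b) ∧ W.R ≤ T.dist (T.smul g e) (W.ends b) ∧
      tt.LegalSeg x (T.smul g⁻¹ (W.ends b)) ∧ e ∈ T.seg x (T.smul g⁻¹ (W.ends b)) := by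
  obtain ⟨g, hg, hR⟩ := W.cover e
  have hc := W.legal.smul g⁻¹
  have he' : e ∈ T.seg (T.smul g⁻¹ (W.ends false)) (T.smul g⁻¹ (W.ends true)) := by
    simpa only [GTree.inv_smul_smul] using smul_mem_seg g⁻¹ hg
  rcases isLegalTurn_or he.symm hc he' with h | h
  · exact ⟨g, false, mem_seg_comm hg, hR false, h.legalSeg he.symm (hc.left he').symm, h 0⟩
  · exact ⟨g, true, hg, hR true, h.legalSeg he.symm (hc.right he'), h 0⟩

theorem exists_ray (W : Window tt) (x : T.X) : ∃ (e : ℕ → T.X) (g : ℕ → G) (b : ℕ → Bool), ∀ n,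
    tt.LegalSeg x (e n) ∧ e n ∈ T.seg x (e (n + 1)) ∧
      T.smul (g n) (e n) ∈ T.seg (W.ends !(b n)) (W.ends (b n)) ∧
      W.R ≤ T.dist (T.smul (g n) (e n)) (W.ends (b n)) ∧
      T.smul (g n) (e (n + 1)) = W.ends (b n) := by
  choose g b hg using fun e : {e // tt.LegalSeg x e} => W.exists_extension e.2
  let next (e : {e // tt.LegalSeg x e}) : {e // tt.LegalSeg x e} :=
    ⟨T.smul (g e)⁻¹ (W.ends (b e)), (hg e).2.2.1⟩
  let s (n : ℕ) := next^[n] ⟨x, legalSeg_refl x⟩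
  have hs (n : ℕ) : s (n + 1) = next (s n) := Function.iterate_succ_apply' next n _
  refine ⟨fun n => (s n).1, fun n => g (s n), fun n => b (s n), fun n => ?_⟩
  obtain ⟨h₁, h₂, -, h₄⟩ := hg (s n)
  refine ⟨(s n).2, ?_, h₁, h₂, ?_⟩
  · dsimp only
    rw [hs]
    exact h₄
  · dsimp only
    rw [hs]
    exact GTree.smul_inv_smul _ _

/-- By pigeonhole two pieces of the ray end at the same end of the window; they share a terminal
piece of length `R`, and `h` carries the earlier copy to the later one. -/
theorem exists_seed (W : Window tt) : ∃ (h : G) (a a' : T.X), a ≠ a' ∧ a' ∈ T.seg a (T.smul h a) ∧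
    T.smul h a ∈ T.seg a (T.smul h a') ∧ tt.LegalSeg a (T.smul h a') := by
  obtain ⟨e, g, b, he⟩ := W.exists_ray (W.ends false)
  obtain ⟨i, k, hik, hb⟩ : ∃ i k, i < k ∧ b i = b k := by
    obtain ⟨i, k, hne, hb⟩ := Fintype.exists_ne_map_eq_of_card_lt (fun i : Fin 3 => b i) (by simp)
    rcases lt_or_gt_of_ne (Fin.val_injective.ne hne) with h | h
    exacts [⟨_, _, h, hb⟩, ⟨_, _, h, hb.symm⟩]
  obtain ⟨-, hei, hAi, hRi, hEi⟩ := he i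
  obtain ⟨-, hek, hAk, hRk, hEk⟩ := he k
  rw [← hb] at hAk hRk hEk
  set E := W.ends (b i)
  set A := W.ends !(b i)
  set x := W.ends false
  have hR := W.R_pos
  have hEA : W.R ≤ T.dist E A := by
    rw [mem_seg] at hAi
    linarith [T.dist_nonneg A (T.smul (g i) (e i)), T.dist_comm A E]
  have hRi' : W.R ≤ T.dist E (T.smul (g i) (e i)) := T.dist_comm _ E ▸ hRi
  have hRk' : W.R ≤ T.dist E (T.smul (g k) (e k)) := T.dist_comm _ E ▸ hRk
  obtain ⟨P₁, hP₁, hP₁d⟩ := exists_mem_seg_dist_eq E A hR.le hEA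
  obtain ⟨P₂, hP₂, hP₂d⟩ := exists_mem_seg_dist_eq E A (t := W.R / 2) (by linarith) (by linarith)
  obtain ⟨ha, had⟩ := inv_smul_mem_seg hei hAi hEi hP₁ (hP₁d ▸ hRi')
  obtain ⟨ha', ha'd⟩ := inv_smul_mem_seg hei hAi hEi hP₂ (by linarith)
  obtain ⟨hb₁, hb₁d⟩ := inv_smul_mem_seg hek hAk hEk hP₁ (hP₁d ▸ hRk')
  obtain ⟨hb₂, hb₂d⟩ := inv_smul_mem_seg hek hAk hEk hP₂ (by linarith)
  have hik' : e (i + 1) ∈ T.seg x (e k) := mem_seg_of_le (fun n => (he n).2.1) hik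
  have hik'' := mem_seg_trans_left hek hik'
  have hgap : T.dist x (e (i + 1)) + W.R ≤ T.dist x (e (k + 1)) := by
    have : T.dist (e k) (e (k + 1)) = T.dist (T.smul (g k) (e k)) E := by rw [← T.isom (g k), hEk]
    rw [mem_seg] at hek hik'
    linarith [T.dist_nonneg (e (i + 1)) (e k)]
  have hh (P : T.X) : T.smul ((g k)⁻¹ * g i) (T.smul (g i)⁻¹ P) = T.smul (g k)⁻¹ P := by
    rw [GTree.smul_smul, mul_inv_cancel_right]
  have hL := (he (k + 1)).1
  refine ⟨(g k)⁻¹ * g i, T.smul (g i)⁻¹ P₁, T.smul (g i)⁻¹ P₂, fun heq => ?_, ?_, ?_, ?_⟩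
  · have := congrArg (T.dist x) heq
    rw [had, ha'd, hP₁d, hP₂d] at this
    linarith
  · rw [hh]
    exact mem_seg_of_dist_le_le (mem_seg_trans_left hik'' ha) (mem_seg_trans_left hik'' ha') hb₁
      (by linarith) (by linarith)
  · rw [hh, hh]
    exact mem_seg_of_dist_le_le (mem_seg_trans_left hik'' ha) hb₁ hb₂ (by linarith) (by linarith)
  · rw [hh]
    exact hL.mono (mem_seg_trans_left hik'' ha) hb₂

end Window

theorem legalSeg_smul_pow_of_seed {h : G} {a a' : T.X} (hne : a ≠ a')
    (ha' : a' ∈ T.seg a (T.smul h a)) (hha : T.smul h a ∈ T.seg a (T.smul h a'))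
    (hL : tt.LegalSeg a (T.smul h a')) (m : ℕ) : tt.LegalSeg a (T.smul (h ^ m) a) := by
  have hchain := smul_pow_mem_seg (smul_mem_seg_smul_smul hne ha' hha) (ne_of_mem_seg_of_ne ha' hne)
  have hseg (m : ℕ) : T.smul (h ^ m) a' ∈ T.seg (T.smul (h ^ m) a) (T.smul (h ^ (m + 1)) a) := by
    simpa only [GTree.smul_smul, ← pow_succ] using smul_mem_seg (h ^ m) ha'
  have hmem (m : ℕ) := mem_seg_trans_right_left (hchain m) (hseg m)
  -- consecutive translates `hᵐ [a, h a']` overlap in `hᵐ [a, a']`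
  have hL' (m : ℕ) : tt.LegalSeg a (T.smul (h ^ m) a') := by
    induction m with
    | zero => simpa [T.smul_one] using hL.left (mem_seg_trans_left hha ha')
    | succ m ih =>
      refine ih.union (D := T.smul (h ^ (m + 1)) a') ?_ (hmem m) ?_ ((smul_injective _).ne hne)
      · simpa only [GTree.smul_smul, ← pow_succ] using hL.smul (h ^ m)
      · simpa only [GTree.smul_smul, ← pow_succ] using
          smul_mem_seg (h ^ m) (mem_seg_trans_left hha ha')
  exact (hL' m).left (hmem m)

theorem exists_legal_line (hprim : tt.Primitive) : ∃ (h : G) (a : T.X),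
    0 < T.dist a (T.smul h a) ∧ ∀ m : ℕ, tt.LegalSeg a (T.smul (h ^ m) a) ∧
      T.dist a (T.smul (h ^ m) a) = m * T.dist a (T.smul h a) := by
  obtain ⟨W⟩ := exists_window hprim
  obtain ⟨h, a, a', hne, ha', hha, hL⟩ := W.exists_seed
  have hne₀ := ne_of_mem_seg_of_ne ha' hne
  exact ⟨h, a, dist_pos_of_ne hne₀, fun m => ⟨legalSeg_smul_pow_of_seed hne ha' hha hL m,
    dist_smul_pow_eq (smul_mem_seg_smul_smul hne ha' hha) hne₀ m⟩⟩

theorem tl_map_pow {h : G} {a : T.X}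
    (hline : ∀ m : ℕ, tt.LegalSeg a (T.smul (h ^ m) a) ∧
      T.dist a (T.smul (h ^ m) a) = m * T.dist a (T.smul h a)) (n m : ℕ) :
    T.tl ((φ ^ n : MulAut G) (h ^ m)) = tt.lam ^ n * (m * T.dist a (T.smul h a)) := by
  refine tl_eq_of_dist_smul_pow_eq (P := tt.f^[n] a) fun k => ?_
  rw [← map_pow, ← pow_mul, ← iterate_smul, (hline (m * k)).1 n, (hline (m * k)).2]
  push_cast
  ring

/-- `fⁿ` stretches `[x, hᵏ x]` by at least `‖φⁿ(hᵏ)‖ / ‖hᵏ‖ = λⁿ`, and such segments cover the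
axis. -/
theorem legalSeg_of_mem_axis {h : G} {x y : T.X} (hpos : 0 < T.tl h)
    (htl : ∀ n m : ℕ, T.tl ((φ ^ n : MulAut G) (h ^ m)) = tt.lam ^ n * (m * T.tl h))
    (hx : x ∈ T.axis h) (hy : y ∈ T.axis h) : tt.LegalSeg x y := by
  have hL (k : ℕ) : tt.LegalSeg x (T.smul (h ^ k) x) := fun n => by
    refine le_antisymm (tt.dist_iterate_le n _ _) ?_
    rw [dist_smul_pow_of_mem_axis hpos hx, ← htl, iterate_smul]
    exact tl_le_dist _ _
  obtain ⟨k, hxk, hyk⟩ := exists_mem_seg_of_mem_axis hpos hx hy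
  have hL' : tt.LegalSeg (T.smul (h ^ k)⁻¹ x) (T.smul (h ^ k) x) := by
    simpa only [GTree.smul_smul, pow_add, inv_mul_cancel_left] using (hL (k + k)).smul (h ^ k)⁻¹
  exact hL'.mono hxk hyk

variable (tt) in
theorem lipConst_twist_pow {h : G} {a : T.X} (hpos : 0 < T.dist a (T.smul h a))
    (htl : ∀ n : ℕ, T.tl ((φ ^ n : MulAut G) h) = tt.lam ^ n * T.dist a (T.smul h a)) (n : ℕ) :
    lipConst T (T.twist (φ ^ n)) = tt.lam ^ n := by
  have hmem : tt.lam ^ n ∈ {K | 0 ≤ K ∧ ∃ f : T.X → T.X,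
      Equivariant T (T.twist (φ ^ n)) f ∧ LipWith T (T.twist (φ ^ n)) K f} :=
    ⟨(pow_pos tt.lam_pos n).le, tt.f^[n], tt.iterate_smul n, tt.dist_iterate_le n⟩
  refine le_antisymm (csInf_le ⟨0, fun K hK => hK.1⟩ hmem) (le_csInf ⟨_, hmem⟩ ?_)
  rintro K ⟨-, θ, hθ, hK⟩
  have := tl_le_mul_dist_of_lipWith hθ hK h a
  rw [show (T.twist (φ ^ n)).tl h = T.tl ((φ ^ n : MulAut G) h) from rfl, htl] at this
  exact le_of_mul_le_mul_right this hpos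

end TrainTrackRep

end GBSFormal

namespace GBSFormal

/-- Let `f : T → T` be a train track representative of `φ ∈ Out(G)` with
primitive transition matrix (expressed metrically) and stretch factor `λ`.
Then there exists a loxodromic `h ∈ G` whose axis in `T` is `f`-legal, and
`‖φⁿ(h)‖_T = λⁿ·‖h‖_T` for every `n ∈ ℕ`; consequently
`Lip(T, T·φⁿ) = λⁿ` for every `n ∈ ℕ` (where `T·φⁿ` is `T` with the action
twisted by `φⁿ`). -/
theorem stmt16 {G : Type*} [Group G] (S : DefSpace G) (φ : MulAut G)
    (TT : S.D) (tt : TrainTrackRep (S.tr TT) φ) (hprim : tt.Primitive) :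
    ∃ h : G, (S.tr TT).Loxodromic h ∧
      (∀ x ∈ (S.tr TT).axis h, ∀ y ∈ (S.tr TT).axis h, tt.LegalSeg x y) ∧
      (∀ n : ℕ, (S.tr TT).tl ((φ ^ n : MulAut G) h) = tt.lam ^ n * (S.tr TT).tl h) ∧
      (∀ n : ℕ, lipConst (S.tr TT) ((S.tr TT).twist (φ ^ n)) = tt.lam ^ n) := by
  obtain ⟨h, a, hpos, hline⟩ := tt.exists_legal_line hprim
  have htl := tt.tl_map_pow hline
  have htl_h : (S.tr TT).tl h = (S.tr TT).dist a ((S.tr TT).smul h a) := by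
    simpa using htl 0 1
  have htl_pow (n : ℕ) : (S.tr TT).tl ((φ ^ n : MulAut G) h) = tt.lam ^ n * (S.tr TT).tl h := by
    simpa [htl_h] using htl n 1
  have hlox : 0 < (S.tr TT).tl h := htl_h ▸ hpos
  refine ⟨h, hlox, fun x hx y hy => ?_, htl_pow, tt.lipConst_twist_pow hpos (htl_h ▸ htl_pow)⟩
  exact tt.legalSeg_of_mem_axis hlox (fun n m => htl_h ▸ htl n m) hx hy

end GBSFormal
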